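/- For every integer n ≥ 2, the function a ↦ h_T(a) := 2·cosh(a) · ∫_1^∞ (t^{2n−2} − 1)^{−1/2} · (cosh²(a)·t² − 1)^{−1/2} dt is strictly decreasing on (0, ∞), and h_T(a) > π/(n−1) for every a > 0. (Hence the heights of the translation-invariant minimal hypersurfaces M_d, d > 1, are bounded from below by π/(n−1), the upper bound of the heights of the catenoids.) -/

import Mathlib

open MeasureTheory

/-! Put `k = 2n - 2` and `s = 1 / cosh a ∈ (0, 1)`. Since
`√(cosh² a · t² - 1) = cosh a · √(t² - s²)`, the height is
`2 ∫_1^∞ (t^k - 1)^{-1/2} (t² - s²)^{-1/2} dt`, whose integrand increases strictly with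
`s ∈ [0, 1)`, while `s` decreases strictly in `a > 0`. At `s = 0` the integrand is
`1 / (t √(t^k - 1))`, with antiderivative `(2/k) arctan √(t^k - 1)`, so the same expression
at `s = 0` equals `2 · π/k = π/(n-1)`, a strict lower bound for every `a > 0`. -/

open Real Set Filter Topology

theorem setIntegral_lt_setIntegral_of_forall_lt {X : Type*} [MeasurableSpace X] {μ : Measure X}
    {s : Set X} {f g : X → ℝ} (hs : MeasurableSet s) (hμs : μ s ≠ 0)
    (hf : IntegrableOn f s μ) (hg : IntegrableOn g s μ) (hlt : ∀ x ∈ s, f x < g x) :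
    ∫ x in s, f x ∂μ < ∫ x in s, g x ∂μ := by
  rw [← sub_pos, ← integral_sub hg hf]
  have hnonneg : 0 ≤ᵐ[μ.restrict s] (g - f) :=
    (ae_restrict_iff' hs).2 (ae_of_all _ fun x hx => sub_nonneg.2 (hlt x hx).le)
  refine (setIntegral_pos_iff_support_of_nonneg_ae hnonneg (hg.sub hf)).2 ?_
  have hsub : s ⊆ Function.support (g - f) ∩ s := fun x hx =>
    ⟨sub_ne_zero.2 (hlt x hx).ne', hx⟩
  exact (pos_iff_ne_zero.2 hμs).trans_le (measure_mono hsub)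

section InverseSqrtPowSubOne

variable {k : ℕ}

theorem hasDerivAt_arctan_sqrt_pow_sub_one (hk : k ≠ 0) {t : ℝ} (ht : 1 < t) :
    HasDerivAt (fun t : ℝ => 2 / k * arctan √(t ^ k - 1)) (1 / (t * √(t ^ k - 1))) t := by
  have hP : 0 < t ^ k - 1 := sub_pos.2 (one_lt_pow₀ ht hk)
  have hsqrt :
      HasDerivAt (fun t : ℝ => √(t ^ k - 1)) (k * t ^ (k - 1) / (2 * √(t ^ k - 1))) t := by
    simpa [div_eq_mul_inv, mul_comm] using ((hasDerivAt_pow k t).sub_const 1).sqrt hP.ne'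
  refine (((hasDerivAt_arctan _).comp t hsqrt).const_mul (2 / k : ℝ)).congr_deriv ?_
  have hpow : t ^ k = t ^ (k - 1) * t := by rw [← pow_succ, Nat.sub_add_cancel (by omega)]
  rw [sq_sqrt hP.le, add_sub_cancel, hpow]
  have : 0 < t := by linarith
  have : 0 < √(t ^ k - 1) := sqrt_pos.2 hP
  field_simp

theorem tendsto_arctan_sqrt_pow_sub_one (hk : k ≠ 0) :
    Tendsto (fun t : ℝ => 2 / k * arctan √(t ^ k - 1)) atTop (𝓝 (2 / k * (π / 2))) := by
  refine (tendsto_nhds_of_tendsto_nhdsWithin tendsto_arctan_atTop).comp ?_ |>.const_mul _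
  exact tendsto_sqrt_atTop.comp
    (tendsto_atTop_add_const_right _ _ (tendsto_pow_atTop hk))

theorem integrableOn_one_div_mul_sqrt_pow_sub_one (hk : k ≠ 0) :
    IntegrableOn (fun t : ℝ => 1 / (t * √(t ^ k - 1))) (Ioi 1) :=
  integrableOn_Ioi_deriv_of_nonneg (by fun_prop)
    (fun _ ht => hasDerivAt_arctan_sqrt_pow_sub_one hk ht)
    (fun t ht => by have : (0 : ℝ) < t := zero_lt_one.trans ht; positivity)
    (tendsto_arctan_sqrt_pow_sub_one hk)

theorem integral_one_div_mul_sqrt_pow_sub_one (hk : k ≠ 0) :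
    ∫ t in Ioi (1 : ℝ), 1 / (t * √(t ^ k - 1)) = π / k := by
  rw [integral_Ioi_of_hasDerivAt_of_nonneg (by fun_prop)
    (fun _ ht => hasDerivAt_arctan_sqrt_pow_sub_one hk ht)
    (fun t ht => by have : (0 : ℝ) < t := zero_lt_one.trans ht; positivity)
    (tendsto_arctan_sqrt_pow_sub_one hk)]
  simp only [one_pow, sub_self, sqrt_zero, arctan_zero, mul_zero, sub_zero]
  ring

end InverseSqrtPowSubOne

noncomputable def heightKernel (k : ℕ) (s t : ℝ) : ℝ :=
  1 / (√(t ^ k - 1) * √(t ^ 2 - s ^ 2))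

section HeightKernel

variable {k : ℕ} {s t : ℝ}

theorem heightKernel_zero (ht : 0 ≤ t) : heightKernel k 0 t = 1 / (t * √(t ^ k - 1)) := by
  rw [heightKernel, zero_pow two_ne_zero, sub_zero, sqrt_sq ht, mul_comm]

theorem heightKernel_inv (hs : 0 < s) :
    heightKernel k s⁻¹ t = s * (1 / (√(t ^ k - 1) * √(s ^ 2 * t ^ 2 - 1))) := by
  have : s ^ 2 * t ^ 2 - 1 = s ^ 2 * (t ^ 2 - s⁻¹ ^ 2) := by field_simp
  rw [heightKernel, this, sqrt_mul (by positivity), sqrt_sq hs.le]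
  field_simp

theorem heightKernel_nonneg : 0 ≤ heightKernel k s t := by
  unfold heightKernel; positivity

theorem measurable_heightKernel : Measurable (heightKernel k s) := by
  unfold heightKernel; fun_prop

theorem heightKernel_lt_heightKernel {s₁ s₂ : ℝ} (hk : k ≠ 0) (ht : 1 < t)
    (hs : s₁ ^ 2 < s₂ ^ 2) (hs₂ : s₂ ^ 2 < 1) :
    heightKernel k s₁ t < heightKernel k s₂ t := by
  have hP : 0 < √(t ^ k - 1) := sqrt_pos.2 (sub_pos.2 (one_lt_pow₀ ht hk))
  have hQ : 0 < t ^ 2 - s₂ ^ 2 := by nlinarith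
  refine one_div_lt_one_div_of_lt (by positivity) (mul_lt_mul_of_pos_left ?_ hP)
  exact sqrt_lt_sqrt hQ.le (by linarith)

theorem heightKernel_le (hk : k ≠ 0) (ht : 1 < t) (hs : s ^ 2 < 1) :
    heightKernel k s t ≤ (√(1 - s ^ 2))⁻¹ * heightKernel k 0 t := by
  have ht₀ : 0 < t := zero_lt_one.trans ht
  have hP : 0 < √(t ^ k - 1) := sqrt_pos.2 (sub_pos.2 (one_lt_pow₀ ht hk))
  have hs' : 0 < √(1 - s ^ 2) := sqrt_pos.2 (by linarith)
  have hsqrt : t * √(1 - s ^ 2) ≤ √(t ^ 2 - s ^ 2) := by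
    have hts : s ^ 2 ≤ t ^ 2 * s ^ 2 := le_mul_of_one_le_left (sq_nonneg s) (one_le_pow₀ ht.le)
    calc t * √(1 - s ^ 2) = √(t ^ 2 * (1 - s ^ 2)) := by
          rw [sqrt_mul (sq_nonneg t), sqrt_sq ht₀.le]
      _ ≤ √(t ^ 2 - s ^ 2) := sqrt_le_sqrt (by linarith)
  calc heightKernel k s t ≤ 1 / (√(t ^ k - 1) * (t * √(1 - s ^ 2))) :=
        one_div_le_one_div_of_le (by positivity) (mul_le_mul_of_nonneg_left hsqrt hP.le)
    _ = (√(1 - s ^ 2))⁻¹ * heightKernel k 0 t := by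
        rw [heightKernel_zero ht₀.le]; field_simp

theorem integrableOn_heightKernel (hk : k ≠ 0) (hs : s ^ 2 < 1) :
    IntegrableOn (heightKernel k s) (Ioi 1) := by
  refine Integrable.mono' ((integrableOn_one_div_mul_sqrt_pow_sub_one hk).const_mul
    (√(1 - s ^ 2))⁻¹) measurable_heightKernel.aestronglyMeasurable ?_
  refine (ae_restrict_iff' measurableSet_Ioi).2 (ae_of_all _ fun t ht => ?_)
  rw [norm_of_nonneg heightKernel_nonneg, ← heightKernel_zero (zero_le_one.trans (le_of_lt ht))]
  exact heightKernel_le hk ht hs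

theorem integral_heightKernel_zero (hk : k ≠ 0) :
    ∫ t in Ioi (1 : ℝ), heightKernel k 0 t = π / k := by
  rw [← integral_one_div_mul_sqrt_pow_sub_one hk]
  exact setIntegral_congr_fun measurableSet_Ioi fun t ht =>
    heightKernel_zero (zero_le_one.trans (le_of_lt ht))

theorem strictMonoOn_integral_heightKernel (hk : k ≠ 0) :
    StrictMonoOn (fun s => ∫ t in Ioi (1 : ℝ), heightKernel k s t) (Ico 0 1) := by
  intro s₁ hs₁ s₂ hs₂ hs
  have hsq : s₁ ^ 2 < s₂ ^ 2 := pow_lt_pow_left₀ hs hs₁.1 two_ne_zero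
  have hsq₂ : s₂ ^ 2 < 1 := pow_lt_one₀ hs₂.1 hs₂.2 two_ne_zero
  exact setIntegral_lt_setIntegral_of_forall_lt measurableSet_Ioi (by simp)
    (integrableOn_heightKernel hk (hsq.trans hsq₂)) (integrableOn_heightKernel hk hsq₂)
    fun t ht => heightKernel_lt_heightKernel hk ht hsq hsq₂

end HeightKernel

/-- the height
`h_T(a) = 2 cosh(a) ∫_1^∞ (t^{2n-2}-1)^{-1/2} (cosh²(a)t²-1)^{-1/2} dt`
of the translation-invariant minimal hypersurfaces is strictly decreasing on `(0, ∞)`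
and satisfies `h_T(a) > π/(n-1)` for every `a > 0`. -/
theorem stmt_17 (n : ℕ) (hn : 2 ≤ n) :
    StrictAntiOn
      (fun a => 2 * Real.cosh a *
        ∫ t in Set.Ioi (1 : ℝ),
          1 / (Real.sqrt (t ^ (2 * n - 2) - 1) * Real.sqrt (Real.cosh a ^ 2 * t ^ 2 - 1)))
      (Set.Ioi 0) ∧
    ∀ a > (0 : ℝ),
      Real.pi / ((n : ℝ) - 1) <
        2 * Real.cosh a *
          ∫ t in Set.Ioi (1 : ℝ),
            1 / (Real.sqrt (t ^ (2 * n - 2) - 1) *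
              Real.sqrt (Real.cosh a ^ 2 * t ^ 2 - 1)) := by
  have hk : 2 * n - 2 ≠ 0 := by omega
  have height_eq (a : ℝ) : 2 * cosh a * ∫ t in Ioi (1 : ℝ),
      1 / (√(t ^ (2 * n - 2) - 1) * √(cosh a ^ 2 * t ^ 2 - 1)) =
      2 * ∫ t in Ioi (1 : ℝ), heightKernel (2 * n - 2) (cosh a)⁻¹ t := by
    simp only [heightKernel_inv (cosh_pos a), integral_const_mul, mul_assoc]
  have sech_mem (a : ℝ) (ha : 0 < a) : (cosh a)⁻¹ ∈ Ico 0 1 :=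
    ⟨inv_nonneg.2 (cosh_pos a).le, inv_lt_one_of_one_lt₀ (one_lt_cosh.2 ha.ne')⟩
  have sech_lt (a b : ℝ) (ha : 0 < a) (hab : a < b) : (cosh b)⁻¹ < (cosh a)⁻¹ := by
    rw [inv_lt_inv₀ (cosh_pos b) (cosh_pos a), cosh_lt_cosh, abs_of_pos ha,
      abs_of_pos (ha.trans hab)]
    exact hab
  have hπ : π / ((n : ℝ) - 1) = 2 * (π / ((2 * n - 2 : ℕ) : ℝ)) := by
    rw [Nat.cast_sub (by omega)]; push_cast; field_simp
  refine ⟨fun a ha b hb hab => ?_, fun a ha => ?_⟩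
  · simp only [height_eq]
    gcongr 2 * ?_
    exact strictMonoOn_integral_heightKernel hk (sech_mem b hb) (sech_mem a ha)
      (sech_lt a b ha hab)
  · rw [height_eq, hπ, ← integral_heightKernel_zero hk]
    gcongr 2 * ?_
    exact strictMonoOn_integral_heightKernel hk ⟨le_rfl, one_pos⟩ (sech_mem a ha)
      (inv_pos.2 (cosh_pos a))
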